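/- arXiv:1507.01613 — 4 statements merged into one kernel-verified Lean document; each statement's English description precedes it below -/
import Mathlib

section
/- Let G be a simple graph with the same degree sequence as the disjoint union of cliques K_{a_1} ∪ ... ∪ K_{a_k}. If G is not isomorphic to K_{a_1} ∪ ... ∪ K_{a_k}, then α(G) ≥ k+1. -/
open SimpleGraph

open scoped Classical in
/-- The degree sequence (multiset of degrees) of a finite simple graph. -/
noncomputable def degSeq {V : Type*} [Fintype V] (G : SimpleGraph V) : Multiset ℕ :=
  Finset.univ.val.map fun v => G.degree v

/-- The independence number of a simple graph. -/
noncomputable def indepNum {V : Type*} (G : SimpleGraph V) : ℕ :=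
  sSup {n | ∃ s : Finset V, s.card = n ∧ ∀ u ∈ s, ∀ v ∈ s, u ≠ v → ¬ G.Adj u v}

/-- The disjoint union of cliques `K_{a 0} ∪ … ∪ K_{a (k-1)}`. -/
def cliqueUnion {k : ℕ} (a : Fin k → ℕ) : SimpleGraph (Σ i : Fin k, Fin (a i)) :=
  SimpleGraph.fromRel (fun u v => u.1 = v.1)

open scoped Classical


section Gc
variable {V : Type} [Fintype V] (G : SimpleGraph V) (C : Finset V)

/-- The induced graph outside `C`. -/
def Gc : SimpleGraph {x : V // x ∉ C} := G.comap Subtype.val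

lemma gc_adj (x y : {x : V // x ∉ C}) : (Gc G C).Adj x y ↔ G.Adj x.val y.val := Iff.rfl

lemma nbhd_Gc (x : {x : V // x ∉ C}) :
    ((Gc G C).neighborFinset x).map (Function.Embedding.subtype _) =
      (G.neighborFinset x.val).filter (fun y => y ∉ C) := by
  ext y
  simp only [Finset.mem_map, SimpleGraph.mem_neighborFinset, Finset.mem_filter,
    Function.Embedding.coe_subtype]
  constructor
  · rintro ⟨z, hz, rfl⟩; exact ⟨hz, z.2⟩
  · rintro ⟨hy, hyC⟩; exact ⟨⟨y, hyC⟩, hy, rfl⟩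

lemma degree_Gc (x : {x : V // x ∉ C}) :
    (Gc G C).degree x = ((G.neighborFinset x.val).filter (fun y => y ∉ C)).card := by
  rw [← nbhd_Gc, Finset.card_map, SimpleGraph.card_neighborFinset_eq_degree]

lemma degree_Gc_le (x : {x : V // x ∉ C}) : (Gc G C).degree x ≤ G.degree x.val := by
  rw [degree_Gc]
  exact le_trans (Finset.card_le_card (Finset.filter_subset _ _)) (le_of_eq (SimpleGraph.card_neighborFinset_eq_degree _ _))

lemma degree_Gc_eq (x : {x : V // x ∉ C}) (h : ∀ y ∈ C, ¬ G.Adj x.val y) :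
    (Gc G C).degree x = G.degree x.val := by
  rw [degree_Gc, Finset.filter_true_of_mem, SimpleGraph.card_neighborFinset_eq_degree]
  intro y hy
  intro hyC
  exact h y hyC (by rwa [SimpleGraph.mem_neighborFinset] at hy)

lemma no_adj_of_degree_Gc_eq (x : {x : V // x ∉ C})
    (h : (Gc G C).degree x = G.degree x.val) : ∀ y ∈ C, ¬ G.Adj x.val y := by
  rw [degree_Gc] at h
  have hsub : (G.neighborFinset x.val).filter (fun y => y ∉ C) = G.neighborFinset x.val := by
    apply Finset.eq_of_subset_of_card_le (Finset.filter_subset _ _)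
    rw [h, SimpleGraph.card_neighborFinset_eq_degree]
  intro y hyC hadj
  have : y ∈ (G.neighborFinset x.val).filter (fun y => y ∉ C) := by
    rw [hsub, SimpleGraph.mem_neighborFinset]; exact hadj
  exact (Finset.mem_filter.1 this).2 hyC

lemma univ_val_split :
    (Finset.univ.val.map fun v : V => G.degree v) =
      (C.val.map fun v => G.degree v) +
        (((Finset.univ : Finset {x : V // x ∉ C}).map (Function.Embedding.subtype _)).val.map
          fun v => G.degree v) := by
  rw [← Multiset.map_add]
  congr 1
  have h1 : ((Finset.univ : Finset {x : V // x ∉ C}).map (Function.Embedding.subtype _)) =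
      Finset.univ \ C := by
    ext x
    simp [Finset.mem_map, Function.Embedding.coe_subtype]
  rw [h1, Finset.sdiff_val]
  have hle : C.val ≤ Finset.univ.val := Finset.val_le_iff.2 (Finset.subset_univ C)
  rw [add_tsub_cancel_of_le hle]

end Gc

def IsCliqueComp {V : Type*} (G : SimpleGraph V) (C : Finset V) : Prop :=
  ∀ x ∈ C, ∀ y, G.Adj x y ↔ (y ∈ C ∧ y ≠ x)

lemma le_indepNum {V : Type*} [Fintype V] (G : SimpleGraph V) {s : Finset V}
    (h : ∀ u ∈ s, ∀ v ∈ s, u ≠ v → ¬ G.Adj u v) : s.card ≤ _root_.indepNum G :=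
  le_csSup ⟨Fintype.card V, fun n ⟨s, hs, _⟩ => hs ▸ s.card_le_univ⟩ ⟨s, rfl, h⟩

lemma exists_indep {V : Type*} [Fintype V] (G : SimpleGraph V) :
    ∃ s : Finset V, s.card = _root_.indepNum G ∧ ∀ u ∈ s, ∀ v ∈ s, u ≠ v → ¬ G.Adj u v := by
  have h := Nat.sSup_mem (s := {n | ∃ s : Finset V, s.card = n ∧ ∀ u ∈ s, ∀ v ∈ s, u ≠ v → ¬ G.Adj u v})
    ⟨0, ∅, by simp⟩ ⟨Fintype.card V, fun n hn => by obtain ⟨s, hs, -⟩ := hn; exact hs ▸ s.card_le_univ⟩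
  exact h

section CC2
variable {V : Type} [Fintype V] {G : SimpleGraph V} {C : Finset V}

lemma IsCliqueComp.not_adj_out (hC : IsCliqueComp G C) {x y : V} (hx : x ∈ C) (hy : y ∉ C) :
    ¬ G.Adj x y := fun h => hy ((hC x hx y).1 h).1

lemma IsCliqueComp.nbhd (hC : IsCliqueComp G C) {x : V} (hx : x ∈ C) :
    G.neighborFinset x = C.erase x := by
  ext y
  simp only [SimpleGraph.mem_neighborFinset, Finset.mem_erase]
  rw [hC x hx y]; tauto

lemma IsCliqueComp.degree (hC : IsCliqueComp G C) {x : V} (hx : x ∈ C) :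
    G.degree x = C.card - 1 := by
  rw [SimpleGraph.degree, hC.nbhd hx, Finset.card_erase_of_mem hx]

lemma cliqueComp_of_degrees (hdeg : ∀ u ∈ C, G.degree u = C.card - 1)
    (hclosed : ∀ x ∉ C, ∀ u ∈ C, ¬ G.Adj x u) : IsCliqueComp G C := by
  intro x hx y
  constructor
  · intro hxy
    by_cases hyC : y ∈ C
    · exact ⟨hyC, hxy.ne'⟩
    · exact absurd hxy.symm (hclosed y hyC x hx)
  · rintro ⟨hy, hyx⟩
    have hsub : G.neighborFinset x ⊆ C.erase x := by
      intro z hz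
      rw [SimpleGraph.mem_neighborFinset] at hz
      rcases (by by_contra hzC; exact hclosed z hzC x hx hz.symm : z ∈ C) with hzC
      exact Finset.mem_erase.2 ⟨hz.ne', hzC⟩
    have heq : G.neighborFinset x = C.erase x := by
      apply Finset.eq_of_subset_of_card_le hsub
      rw [Finset.card_erase_of_mem hx, SimpleGraph.card_neighborFinset_eq_degree, hdeg x hx]
    have : y ∈ G.neighborFinset x := by
      rw [heq]; exact Finset.mem_erase.2 ⟨hyx, hy⟩
    rwa [SimpleGraph.mem_neighborFinset] at this

lemma degSeq_decomp (hC : IsCliqueComp G C) :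
    degSeq G = Multiset.replicate C.card (C.card - 1) + degSeq (Gc G C) := by
  unfold degSeq
  rw [univ_val_split G C]
  congr 1
  · apply Multiset.eq_replicate.2
    constructor
    · simp
    · intro b hb
      obtain ⟨x, hx, rfl⟩ := Multiset.mem_map.1 hb
      exact hC.degree hx
  · rw [Finset.map_val, Multiset.map_map]
    apply Multiset.map_congr rfl
    intro x _
    exact (degree_Gc_eq G C x fun y hy hadj =>
      (hC.not_adj_out hy x.2) hadj.symm).symm

lemma indep_lift {v : V} (hv : ∀ y, G.Adj v y → y ∈ C) (hvC : v ∈ C) :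
    _root_.indepNum (Gc G C) + 1 ≤ _root_.indepNum G := by
  obtain ⟨s', hcard, hind⟩ := exists_indep (Gc G C)
  set s : Finset V := s'.map (Function.Embedding.subtype _) with hs
  have hvs : v ∉ s := by
    rw [hs]
    simp only [Finset.mem_map, Function.Embedding.coe_subtype]
    rintro ⟨x, _, rfl⟩
    exact x.2 hvC
  have hmem : ∀ {z : V}, z ∈ s → ∃ hz : z ∉ C, (⟨z, hz⟩ : {x : V // x ∉ C}) ∈ s' := by
    intro z hz
    rw [hs] at hz
    simp only [Finset.mem_map, Function.Embedding.coe_subtype] at hz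
    obtain ⟨x, hx, rfl⟩ := hz
    exact ⟨x.2, hx⟩
  have hins : ∀ u ∈ insert v s, ∀ w ∈ insert v s, u ≠ w → ¬ G.Adj u w := by
    intro u hu w hw huw hadj
    rcases Finset.mem_insert.1 hu with hu1 | hu2 <;> rcases Finset.mem_insert.1 hw with hw1 | hw2
    · exact huw (hu1.trans hw1.symm)
    · subst hu1
      obtain ⟨hzC, -⟩ := hmem hw2
      exact hzC (hv w hadj)
    · subst hw1
      obtain ⟨hzC, -⟩ := hmem hu2
      exact hzC (hv u hadj.symm)
    · obtain ⟨huC, hu'⟩ := hmem hu2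
      obtain ⟨hwC, hw'⟩ := hmem hw2
      exact hind _ hu' _ hw' (by simpa using huw) hadj
  have := le_indepNum G hins
  rwa [Finset.card_insert_of_notMem hvs, Finset.card_map, hcard] at this

end CC2

def P3Free {V : Type*} (G : SimpleGraph V) : Prop :=
  ∀ ⦃u v w : V⦄, G.Adj u v → G.Adj u w → v ≠ w → G.Adj v w

lemma caroWei (n : ℕ) : ∀ (V : Type) [Fintype V] (G : SimpleGraph V), Fintype.card V ≤ n →
    ((∑ v : V, (1:ℚ)/(G.degree v + 1)) ≤ _root_.indepNum G) ∧
      (¬ P3Free G → (∑ v : V, (1:ℚ)/(G.degree v + 1)) < _root_.indepNum G) := by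
  induction n with
  | zero =>
    intro V _ G hcard
    have hE : IsEmpty V := Fintype.card_eq_zero_iff.1 (le_antisymm hcard (Nat.zero_le _))
    constructor
    · rw [Finset.univ_eq_empty, Finset.sum_empty]; positivity
    · intro hP
      exact absurd (fun u _ _ _ _ _ => (hE.false u).elim) hP
  | succ n ih =>
    intro V _ G hcard
    rcases isEmpty_or_nonempty V with hE | hne
    · constructor
      · rw [Finset.univ_eq_empty, Finset.sum_empty]; positivity
      · intro hP
        exact absurd (fun u _ _ _ _ _ => (hE.false u).elim) hP
    obtain ⟨v, -, hmin⟩ := Finset.exists_min_image Finset.univ (fun u => G.degree u)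
      ⟨Classical.arbitrary V, Finset.mem_univ _⟩
    have hmin' : ∀ u : V, G.degree v ≤ G.degree u := fun u => hmin u (Finset.mem_univ u)
    set C := insert v (G.neighborFinset v) with hCdef
    have hvC : v ∈ C := Finset.mem_insert_self _ _
    have hvnb : ∀ y, G.Adj v y → y ∈ C := fun y h =>
      Finset.mem_insert_of_mem ((SimpleGraph.mem_neighborFinset _ _ _).2 h)
    have hcardC : C.card = G.degree v + 1 := by
      rw [hCdef, Finset.card_insert_of_notMem (by simp),
        SimpleGraph.card_neighborFinset_eq_degree]
    have hcard' : Fintype.card {x : V // x ∉ C} ≤ n := by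
      have h1 : Fintype.card {x : V // x ∉ C} = Fintype.card V - Fintype.card {x : V // x ∈ C} :=
        Fintype.card_subtype_compl _
      have h2 : Fintype.card {x : V // x ∈ C} = C.card := Fintype.card_coe C
      omega
    obtain ⟨ihle, ihlt⟩ := ih {x : V // x ∉ C} (Gc G C) hcard'
    have hlift : _root_.indepNum (Gc G C) + 1 ≤ _root_.indepNum G := indep_lift hvnb hvC
    have hliftQ : (_root_.indepNum (Gc G C) : ℚ) + 1 ≤ (_root_.indepNum G : ℚ) := by exact_mod_cast hlift
    have hsplit : (∑ u : V, (1:ℚ)/(G.degree u + 1)) =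
        (∑ u ∈ C, (1:ℚ)/(G.degree u + 1)) +
        (∑ x : {x : V // x ∉ C}, (1:ℚ)/(G.degree x.val + 1)) := by
      have h2 : (∑ u ∈ Cᶜ, (1:ℚ)/(G.degree u + 1)) =
          ∑ x : {x : V // x ∉ C}, (1:ℚ)/(G.degree x.val + 1) :=
        Finset.sum_subtype Cᶜ (fun x => Finset.mem_compl) (fun u => (1:ℚ)/(G.degree u + 1))
      rw [← h2]
      exact (Finset.sum_add_sum_compl C _).symm
    have hposd : ∀ u : V, (0:ℚ) < (G.degree u : ℚ) + 1 := fun u => by positivity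
    have hAle : ∀ u ∈ C, (1:ℚ)/(G.degree u + 1) ≤ 1/(G.degree v + 1) := by
      intro u _
      apply one_div_le_one_div_of_le (hposd v)
      have h : (G.degree v : ℚ) ≤ G.degree u := by exact_mod_cast hmin' u
      linarith
    have hA : (∑ u ∈ C, (1:ℚ)/(G.degree u + 1)) ≤ 1 := by
      calc (∑ u ∈ C, (1:ℚ)/(G.degree u + 1)) ≤ ∑ _u ∈ C, (1:ℚ)/(G.degree v + 1) :=
            Finset.sum_le_sum hAle
        _ = C.card * ((1:ℚ)/(G.degree v + 1)) := by rw [Finset.sum_const, nsmul_eq_mul]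
        _ = 1 := by
            rw [hcardC]
            push_cast
            field_simp
    have hBle : ∀ x : {x : V // x ∉ C}, (1:ℚ)/(G.degree x.val + 1) ≤ 1/((Gc G C).degree x + 1) := by
      intro x
      apply one_div_le_one_div_of_le (by positivity)
      have h : ((Gc G C).degree x : ℚ) ≤ G.degree x.val := by exact_mod_cast degree_Gc_le G C x
      linarith
    have hB : (∑ x : {x : V // x ∉ C}, (1:ℚ)/(G.degree x.val + 1)) ≤
        ∑ x : {x : V // x ∉ C}, (1:ℚ)/((Gc G C).degree x + 1) :=
      Finset.sum_le_sum fun x _ => hBle x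
    constructor
    · rw [hsplit]
      calc _ ≤ 1 + ∑ x : {x : V // x ∉ C}, (1:ℚ)/((Gc G C).degree x + 1) := by
            linarith
        _ ≤ 1 + (_root_.indepNum (Gc G C) : ℚ) := by linarith
        _ ≤ _ := by linarith
    · intro hnp3
      rw [hsplit]
      by_cases hA' : ∃ u ∈ C, G.degree v < G.degree u
      · obtain ⟨u, huC, hu⟩ := hA'
        have hAstrict : (∑ u ∈ C, (1:ℚ)/(G.degree u + 1)) < 1 := by
          have h := Finset.sum_lt_sum hAle ⟨u, huC, by
            apply one_div_lt_one_div_of_lt (hposd v)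
            have : (G.degree v : ℚ) < G.degree u := by exact_mod_cast hu
            linarith⟩
          calc (∑ u ∈ C, (1:ℚ)/(G.degree u + 1)) < ∑ _u ∈ C, (1:ℚ)/(G.degree v + 1) := h
            _ = C.card * ((1:ℚ)/(G.degree v + 1)) := by rw [Finset.sum_const, nsmul_eq_mul]
            _ = 1 := by rw [hcardC]; push_cast; field_simp
        linarith
      by_cases hB' : ∃ x : {x : V // x ∉ C}, (Gc G C).degree x < G.degree x.val
      · obtain ⟨x, hx⟩ := hB'
        have hBstrict : (∑ x : {x : V // x ∉ C}, (1:ℚ)/(G.degree x.val + 1)) <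
            ∑ x : {x : V // x ∉ C}, (1:ℚ)/((Gc G C).degree x + 1) := by
          apply Finset.sum_lt_sum (fun x _ => hBle x)
          refine ⟨x, Finset.mem_univ x, ?_⟩
          apply one_div_lt_one_div_of_lt (by positivity)
          have : ((Gc G C).degree x : ℚ) < G.degree x.val := by exact_mod_cast hx
          linarith
        linarith
      push_neg at hA' hB'
      have hdegC : ∀ u ∈ C, G.degree u = G.degree v := fun u hu =>
        le_antisymm (hA' u hu) (hmin' u)
      have hdegOut : ∀ x : {x : V // x ∉ C}, (Gc G C).degree x = G.degree x.val := fun x =>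
        le_antisymm (degree_Gc_le G C x) (hB' x)
      have hclosed : ∀ x ∉ C, ∀ u ∈ C, ¬ G.Adj x u := fun x hx =>
        no_adj_of_degree_Gc_eq G C ⟨x, hx⟩ (hdegOut ⟨x, hx⟩)
      have hCC : IsCliqueComp G C := by
        apply cliqueComp_of_degrees _ hclosed
        intro u hu
        rw [hdegC u hu, hcardC]
        omega
      unfold P3Free at hnp3
      push_neg at hnp3
      obtain ⟨p, q, r, hpq, hpr, hqr, hnadj⟩ := hnp3
      have hpC : p ∉ C := by
        intro hp
        have hq : q ∈ C := ((hCC p hp q).1 hpq).1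
        have hr : r ∈ C := ((hCC p hp r).1 hpr).1
        exact hnadj ((hCC q hq r).2 ⟨hr, hqr.symm⟩)
      have hqC : q ∉ C := fun hq => hpC ((hCC q hq p).1 hpq.symm).1
      have hrC : r ∉ C := fun hr => hpC ((hCC r hr p).1 hpr.symm).1
      have hnp3' : ¬ P3Free (Gc G C) := by
        intro h
        exact hnadj (h (u := ⟨p, hpC⟩) (v := ⟨q, hqC⟩) (w := ⟨r, hrC⟩) hpq hpr
          (fun he => hqr (congrArg Subtype.val he)))
      have hstrict := ihlt hnp3'
      have hBeq : (∑ x : {x : V // x ∉ C}, (1:ℚ)/(G.degree x.val + 1)) =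
          ∑ x : {x : V // x ∉ C}, (1:ℚ)/((Gc G C).degree x + 1) :=
        Finset.sum_congr rfl fun x _ => by rw [hdegOut x]
      rw [hBeq]
      linarith

lemma closedNbhd_cliqueComp {V : Type} [Fintype V] {G : SimpleGraph V} (h : P3Free G) (v : V) :
    IsCliqueComp G (insert v (G.neighborFinset v)) := by
  intro x hx y
  simp only [Finset.mem_insert, SimpleGraph.mem_neighborFinset] at hx ⊢
  constructor
  · intro hxy
    refine ⟨?_, hxy.ne'⟩
    rcases hx with rfl | hx
    · exact Or.inr hxy
    · rcases eq_or_ne y v with rfl | hyv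
      · exact Or.inl rfl
      · exact Or.inr (h hx.symm hxy hyv.symm)
  · rintro ⟨hy, hyx⟩
    rcases hx with rfl | hx
    · rcases hy with rfl | hy
      · exact absurd rfl hyx
      · exact hy
    · rcases hy with rfl | hy
      · exact hx.symm
      · exact h hx hy (Ne.symm hyx)

lemma degSeq_card {V : Type} [Fintype V] (G : SimpleGraph V) :
    Multiset.card (degSeq G) = Fintype.card V := by
  simp [degSeq]

lemma p3free_Gc {V : Type} [Fintype V] {G : SimpleGraph V} (h : P3Free G) (C : Finset V) :
    P3Free (Gc G C) := by
  intro a b c hab hac hbc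
  exact h hab hac (fun he => hbc (Subtype.ext he))

lemma iso_of_p3free (n : ℕ) : ∀ (V W : Type) [Fintype V] [Fintype W]
    (G : SimpleGraph V) (H : SimpleGraph W), Fintype.card V ≤ n →
    P3Free G → P3Free H → degSeq G = degSeq H → Nonempty (G ≃g H) := by
  induction n with
  | zero =>
    intro V W _ _ G H hcard _ _ hdeg
    have hV : IsEmpty V := Fintype.card_eq_zero_iff.1 (le_antisymm hcard (Nat.zero_le _))
    have hW : IsEmpty W := by
      rw [← Fintype.card_eq_zero_iff, ← degSeq_card H, ← hdeg, degSeq_card G]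
      omega
    exact ⟨⟨Equiv.equivOfIsEmpty V W, fun {a} => isEmptyElim a⟩⟩
  | succ n ih =>
    intro V W _ _ G H hcard hG hH hdeg
    rcases isEmpty_or_nonempty V with hV | hne
    · have hW : IsEmpty W := by
        rw [← Fintype.card_eq_zero_iff, ← degSeq_card H, ← hdeg, degSeq_card G,
          Fintype.card_eq_zero]
      exact ⟨⟨Equiv.equivOfIsEmpty V W, fun {a} => isEmptyElim a⟩⟩
    obtain ⟨v⟩ := hne
    set d := G.degree v with hd
    have hdH : ∃ w : W, H.degree w = d := by
      have : d ∈ degSeq H := by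
        rw [← hdeg]
        exact Multiset.mem_map.2 ⟨v, Finset.mem_univ_val _, rfl⟩
      obtain ⟨w, _, hw⟩ := Multiset.mem_map.1 this
      exact ⟨w, hw⟩
    obtain ⟨w, hw⟩ := hdH
    set C := insert v (G.neighborFinset v) with hCdef
    set D := insert w (H.neighborFinset w) with hDdef
    have hCC : IsCliqueComp G C := closedNbhd_cliqueComp hG v
    have hDD : IsCliqueComp H D := closedNbhd_cliqueComp hH w
    have hcardC : C.card = d + 1 := by
      rw [hCdef, Finset.card_insert_of_notMem (by simp),
        SimpleGraph.card_neighborFinset_eq_degree]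
    have hcardD : D.card = d + 1 := by
      rw [hDdef, Finset.card_insert_of_notMem (by simp),
        SimpleGraph.card_neighborFinset_eq_degree, hw]
    have hdecG := degSeq_decomp hCC
    have hdecH := degSeq_decomp hDD
    have hdeg' : degSeq (Gc G C) = degSeq (Gc H D) := by
      have : Multiset.replicate C.card (C.card - 1) + degSeq (Gc G C) =
          Multiset.replicate C.card (C.card - 1) + degSeq (Gc H D) := by
        rw [← hdecG, hdeg, hdecH, hcardC, hcardD]
      exact add_left_cancel this
    have hcard' : Fintype.card {x : V // x ∉ C} ≤ n := by
      have h1 : Fintype.card {x : V // x ∉ C} = Fintype.card V - Fintype.card {x : V // x ∈ C} :=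
        Fintype.card_subtype_compl _
      have h2 : Fintype.card {x : V // x ∈ C} = C.card := Fintype.card_coe C
      have h3 : 1 ≤ C.card := Finset.card_pos.2 ⟨v, Finset.mem_insert_self _ _⟩
      omega
    obtain ⟨e'⟩ := ih {x : V // x ∉ C} {y : W // y ∉ D} (Gc G C) (Gc H D) hcard'
      (p3free_Gc hG C) (p3free_Gc hH D) hdeg'
    have hcards : Fintype.card {x : V // x ∈ C} = Fintype.card {y : W // y ∈ D} := by
      rw [Fintype.card_coe, Fintype.card_coe, hcardC, hcardD]
    let e0 : {x : V // x ∈ C} ≃ {y : W // y ∈ D} := Finset.equivOfCardEq (by rw [hcardC, hcardD])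
    let φ : V ≃ W := ((Equiv.sumCompl (· ∈ C)).symm.trans
      ((Equiv.sumCongr e0 e'.toEquiv).trans (Equiv.sumCompl (· ∈ D))))
    have hφ_in : ∀ (a : V) (ha : a ∈ C), φ a = (e0 ⟨a, ha⟩ : W) := by
      intro a ha
      simp only [φ, Equiv.trans_apply, Equiv.sumCongr_apply]
      rw [Equiv.sumCompl_symm_apply_of_pos ha]
      simp
    have hφ_out : ∀ (a : V) (ha : a ∉ C), φ a = (e'.toEquiv ⟨a, ha⟩ : W) := by
      intro a ha
      simp only [φ, Equiv.trans_apply, Equiv.sumCongr_apply]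
      rw [Equiv.sumCompl_symm_apply_of_neg ha]
      simp
    refine ⟨⟨φ, ?_⟩⟩
    intro a b
    by_cases ha : a ∈ C <;> by_cases hb : b ∈ C
    · rw [hφ_in a ha, hφ_in b hb]
      have h1 : H.Adj (e0 ⟨a, ha⟩ : W) (e0 ⟨b, hb⟩ : W) ↔
          ((e0 ⟨b, hb⟩ : W) ∈ D ∧ (e0 ⟨b, hb⟩ : W) ≠ (e0 ⟨a, ha⟩ : W)) :=
        hDD _ (e0 ⟨a, ha⟩).2 _
      have h2 : G.Adj a b ↔ (b ∈ C ∧ b ≠ a) := hCC a ha b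
      rw [h1, h2]
      constructor
      · rintro ⟨-, hne⟩
        refine ⟨hb, fun he => hne ?_⟩
        have : (⟨b, hb⟩ : {x : V // x ∈ C}) = ⟨a, ha⟩ := Subtype.ext he
        rw [this]
      · rintro ⟨-, hne⟩
        refine ⟨(e0 ⟨b, hb⟩).2, fun he => hne ?_⟩
        have := e0.injective (Subtype.ext he)
        exact congrArg Subtype.val this
    · rw [hφ_in a ha, hφ_out b hb]
      constructor
      · intro hadj
        exact absurd ((hDD _ (e0 ⟨a, ha⟩).2 _).1 hadj).1 (e'.toEquiv ⟨b, hb⟩).2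
      · intro hadj
        exact absurd ((hCC a ha b).1 hadj).1 hb
    · rw [hφ_out a ha, hφ_in b hb]
      constructor
      · intro hadj
        exact absurd ((hDD _ (e0 ⟨b, hb⟩).2 _).1 hadj.symm).1 (e'.toEquiv ⟨a, ha⟩).2
      · intro hadj
        exact absurd ((hCC b hb a).1 hadj.symm).1 ha
    · rw [hφ_out a ha, hφ_out b hb]
      exact e'.map_rel_iff (a := ⟨a, ha⟩) (b := ⟨b, hb⟩)

lemma cliqueUnion_adj {k : ℕ} (a : Fin k → ℕ) (u v : Σ i : Fin k, Fin (a i)) :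
    (cliqueUnion a).Adj u v ↔ u ≠ v ∧ u.1 = v.1 := by
  rw [cliqueUnion, SimpleGraph.fromRel_adj]
  constructor
  · rintro ⟨hne, h | h⟩
    · exact ⟨hne, h⟩
    · exact ⟨hne, h.symm⟩
  · rintro ⟨hne, h⟩
    exact ⟨hne, Or.inl h⟩

lemma cliqueUnion_p3free {k : ℕ} (a : Fin k → ℕ) : P3Free (cliqueUnion a) := by
  intro u v w h1 h2 hne
  rw [cliqueUnion_adj] at h1 h2 ⊢
  exact ⟨hne, h1.2.symm.trans h2.2⟩

lemma cliqueUnion_nbhd {k : ℕ} (a : Fin k → ℕ) (i : Fin k) (x : Fin (a i)) :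
    (cliqueUnion a).neighborFinset ⟨i, x⟩ =
      (Finset.univ.erase x).map ⟨fun y => (⟨i, y⟩ : Σ i, Fin (a i)), fun y z h => by
        simpa using h⟩ := by
  ext ⟨j, y⟩
  simp only [SimpleGraph.mem_neighborFinset, cliqueUnion_adj, Finset.mem_map,
    Finset.mem_erase, Finset.mem_univ, and_true, Function.Embedding.coeFn_mk]
  constructor
  · rintro ⟨hne, h⟩
    have h' : i = j := h
    subst h'
    refine ⟨y, fun he => hne ?_, rfl⟩
    subst he; rfl
  · rintro ⟨z, hz, he⟩
    obtain ⟨h1, h2⟩ := Sigma.mk.inj_iff.1 he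
    subst h1
    have : z = y := by simpa using h2
    subst this
    exact ⟨fun he' => hz (by simpa [Sigma.mk.inj_iff] using he'.symm), rfl⟩

lemma cliqueUnion_degree {k : ℕ} (a : Fin k → ℕ) (i : Fin k) (x : Fin (a i)) :
    (cliqueUnion a).degree ⟨i, x⟩ = a i - 1 := by
  rw [SimpleGraph.degree, cliqueUnion_nbhd, Finset.card_map,
    Finset.card_erase_of_mem (Finset.mem_univ x), Finset.card_univ, Fintype.card_fin]

lemma sum_inv_deg_cliqueUnion {k : ℕ} (a : Fin k → ℕ) (ha : ∀ i, 1 ≤ a i) :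
    (∑ v : Σ i : Fin k, Fin (a i), (1:ℚ)/((cliqueUnion a).degree v + 1)) = k := by
  rw [← Finset.univ_sigma_univ, Finset.sum_sigma]
  have : ∀ i : Fin k, (∑ x : Fin (a i), (1:ℚ)/((cliqueUnion a).degree ⟨i, x⟩ + 1)) = 1 := by
    intro i
    have hcast : ((a i - 1 : ℕ) : ℚ) + 1 = (a i : ℚ) := by
      have : (a i - 1) + 1 = a i := Nat.succ_pred_eq_of_pos (ha i)
      exact_mod_cast congrArg (Nat.cast (R := ℚ)) this
    have hne : (a i : ℚ) ≠ 0 := by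
      have := ha i; positivity
    calc (∑ x : Fin (a i), (1:ℚ)/((cliqueUnion a).degree ⟨i, x⟩ + 1))
        = ∑ _x : Fin (a i), (1:ℚ)/(a i) := by
          apply Finset.sum_congr rfl
          intro x _
          rw [cliqueUnion_degree, hcast]
      _ = (a i : ℚ) * (1/(a i)) := by rw [Finset.sum_const, Finset.card_univ,
            Fintype.card_fin, nsmul_eq_mul]
      _ = 1 := by field_simp
  rw [Finset.sum_congr rfl (fun i _ => this i), Finset.sum_const, Finset.card_univ,
    Fintype.card_fin, nsmul_eq_mul, mul_one]

lemma sum_inv_deg_eq_of_degSeq {V W : Type} [Fintype V] [Fintype W]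
    (G : SimpleGraph V) (H : SimpleGraph W) (h : degSeq G = degSeq H) :
    (∑ v : V, (1:ℚ)/(G.degree v + 1)) = ∑ w : W, (1:ℚ)/(H.degree w + 1) := by
  have key : ∀ (U : Type) [Fintype U] (K : SimpleGraph U),
      (∑ u : U, (1:ℚ)/(K.degree u + 1)) = ((degSeq K).map fun d : ℕ => (1:ℚ)/((d:ℚ) + 1)).sum := by
    intro U _ K
    rw [degSeq, Multiset.map_map]
    rfl
  rw [key V G, key W H, h]

theorem main_thm {k : ℕ} (a : Fin k → ℕ)
    (ha : ∀ i, 1 ≤ a i) {V : Type} [Fintype V] (G : SimpleGraph V)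
    (hdeg : degSeq G = degSeq (cliqueUnion a))
    (hniso : ¬ Nonempty (G ≃g cliqueUnion a)) :
    k + 1 ≤ _root_.indepNum G := by
  by_cases hp3 : P3Free G
  · exact absurd (iso_of_p3free (Fintype.card V) V _ G (cliqueUnion a) le_rfl hp3
      (cliqueUnion_p3free a) hdeg) hniso
  · have hsum : (∑ v : V, (1:ℚ)/(G.degree v + 1)) = k := by
      rw [sum_inv_deg_eq_of_degSeq G (cliqueUnion a) hdeg, sum_inv_deg_cliqueUnion a ha]
    have hlt := (caroWei (Fintype.card V) V G le_rfl).2 hp3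
    rw [hsum] at hlt
    have : k < _root_.indepNum G := by exact_mod_cast hlt
    omega

theorem indepNum_ge_of_not_iso_cliqueUnion {k : ℕ} (a : Fin k → ℕ)
    (ha : ∀ i, 1 ≤ a i) {V : Type} [Fintype V] (G : SimpleGraph V)
    (hdeg : degSeq G = degSeq (cliqueUnion a))
    (hniso : ¬ Nonempty (G ≃g cliqueUnion a)) :
    k + 1 ≤ _root_.indepNum G :=
  main_thm a ha G hdeg hniso
end

section
/- Let G be a simple graph with the same degree sequence as the complete k-partite graph K_{a_1,...,a_k}. If G is not isomorphic to K_{a_1,...,a_k}, then ω(G) ≥ k+1. -/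
open SimpleGraph

open Finset

open scoped Classical

variable {V : Type} [Fintype V]

/-- degree of `v` into the set `A`. -/
noncomputable def dOn (H : SimpleGraph V) (A : Finset V) (v : V) : ℕ :=
  (A.filter (fun w => H.Adj v w)).card

lemma dOn_mono (H : SimpleGraph V) {A B : Finset V} (h : B ⊆ A) (v : V) :
    dOn H B v ≤ dOn H A v :=
  Finset.card_le_card (Finset.filter_subset_filter _ h)

lemma carowei (H : SimpleGraph V) (A : Finset V) :
    ∃ s : Finset V, s ⊆ A ∧ (∀ u ∈ s, ∀ w ∈ s, ¬ H.Adj u w) ∧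
      ∑ x ∈ A, (1:ℚ)/(dOn H A x + 1) ≤ s.card := by
  induction A using Finset.strongInductionOn with
  | _ A ih =>
  rcases A.eq_empty_or_nonempty with rfl | hne
  · exact ⟨∅, by simp⟩
  obtain ⟨v, hvA, hmin⟩ := A.exists_min_image (fun x => dOn H A x) hne
  set C : Finset V := insert v (A.filter (fun w => H.Adj v w)) with hCdef
  have hCsub : C ⊆ A := Finset.insert_subset hvA (Finset.filter_subset _ _)
  set B : Finset V := A \ C with hBdef
  have hvB : v ∉ B := by simp [hBdef, hCdef]
  have hBss : B ⊂ A := Finset.ssubset_iff_of_subset (Finset.sdiff_subset) |>.2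
    ⟨v, hvA, hvB⟩
  obtain ⟨s, hsB, hind, hsum⟩ := ih B hBss
  have hvC : v ∈ C := Finset.mem_insert_self _ _
  have hvs : v ∉ s := fun h => hvB (hsB h)
  have hnadj : ∀ z ∈ B, ¬ H.Adj v z := by
    intro z hz hadj
    have hzA : z ∈ A := Finset.sdiff_subset hz
    have : z ∈ C := Finset.mem_insert_of_mem (Finset.mem_filter.2 ⟨hzA, hadj⟩)
    exact (Finset.mem_sdiff.1 hz).2 this
  refine ⟨insert v s, Finset.insert_subset hvA (hsB.trans Finset.sdiff_subset), ?_, ?_⟩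
  · intro u hu w hw
    rcases Finset.mem_insert.1 hu with rfl | hu' <;> rcases Finset.mem_insert.1 hw with rfl | hw'
    · exact H.irrefl
    · exact hnadj w (hsB hw')
    · intro h; exact hnadj u (hsB hu') h.symm
    · exact hind u hu' w hw'
  · have hCcard : C.card = dOn H A v + 1 := by
      rw [hCdef, Finset.card_insert_of_notMem (by simp [H.irrefl]), dOn]
    have hsplit : ∑ x ∈ A, (1:ℚ)/(dOn H A x + 1)
        = ∑ x ∈ B, (1:ℚ)/(dOn H A x + 1) + ∑ x ∈ C, (1:ℚ)/(dOn H A x + 1) := by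
      rw [hBdef, Finset.sum_sdiff hCsub]
    have hC1 : ∑ x ∈ C, (1:ℚ)/(dOn H A x + 1) ≤ 1 := by
      have h1 : ∀ x ∈ C, (1:ℚ)/(dOn H A x + 1) ≤ 1/(dOn H A v + 1) := by
        intro x hx
        apply one_div_le_one_div_of_le (by positivity)
        have := hmin x (hCsub hx)
        exact_mod_cast Nat.add_le_add_right this 1
      calc ∑ x ∈ C, (1:ℚ)/(dOn H A x + 1) ≤ ∑ _x ∈ C, (1:ℚ)/(dOn H A v + 1) :=
            Finset.sum_le_sum h1
        _ = (dOn H A v + 1 : ℚ) * (1/(dOn H A v + 1)) := by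
            rw [Finset.sum_const, hCcard]; push_cast; ring
        _ = 1 := by
            rw [mul_one_div]
            exact div_self (by positivity)
    have hB1 : ∑ x ∈ B, (1:ℚ)/(dOn H A x + 1) ≤ ∑ x ∈ B, (1:ℚ)/(dOn H B x + 1) := by
      apply Finset.sum_le_sum
      intro x hx
      apply one_div_le_one_div_of_le (by positivity)
      have := dOn_mono H (Finset.sdiff_subset (s := A) (t := C)) x
      exact_mod_cast Nat.add_le_add_right this 1
    rw [Finset.card_insert_of_notMem hvs]
    push_cast
    linarith

/-- Key structural lemma: if the degrees of `A` (within `A`) match a disjoint union of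
cliques of sizes `P` and there is no independent subset of size `> P.card`, then
adjacency restricted to `A` is transitive. -/
lemma structureLemma (H : SimpleGraph V) (A : Finset V) :
    ∀ (P : Multiset ℕ), (∀ p ∈ P, 0 < p) →
    A.val.map (dOn H A) = P.bind (fun p => Multiset.replicate p (p-1)) →
    (∀ s : Finset V, s ⊆ A → (∀ u ∈ s, ∀ w ∈ s, ¬ H.Adj u w) → s.card ≤ P.card) →
    ∀ u ∈ A, ∀ w ∈ A, ∀ x ∈ A, H.Adj u w → H.Adj w x → u ≠ x → H.Adj u x := by
  induction A using Finset.strongInductionOn with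
  | _ A ih =>
  intro P hPpos hdeg hbound u hu w hw x hx huw hwx hux
  have hne : A.Nonempty := ⟨u, hu⟩
  -- the sum of 1/(d+1) over A equals P.card
  have hsumA : ∑ y ∈ A, (1:ℚ)/(dOn H A y + 1) = P.card := by
    have h1 : ∑ y ∈ A, (1:ℚ)/(dOn H A y + 1)
        = ((A.val.map (dOn H A)).map (fun d : ℕ => (1:ℚ)/(d+1))).sum := by
      rw [Multiset.map_map]; rfl
    rw [h1, hdeg, Multiset.map_bind]
    have h2 : ∀ p ∈ P, ((Multiset.replicate p (p-1)).map (fun d : ℕ => (1:ℚ)/(d+1))).sum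
        = 1 := by
      intro p hp
      have hp1 : 1 ≤ p := hPpos p hp
      rw [Multiset.map_replicate, Multiset.sum_replicate]
      have : ((p - 1 : ℕ) : ℚ) + 1 = (p : ℚ) := by
        have : (p - 1) + 1 = p := Nat.succ_pred_eq_of_pos hp1
        exact_mod_cast congrArg (Nat.cast : ℕ → ℚ) this
      rw [this, nsmul_eq_mul, mul_one_div]
      exact div_self (Nat.cast_ne_zero.2 (by omega))
    rw [Multiset.sum_bind]
    have : P.map (fun p => ((Multiset.replicate p (p-1)).map (fun d : ℕ => (1:ℚ)/(d+1))).sum)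
        = P.map (fun _ => (1:ℚ)) := Multiset.map_congr rfl h2
    rw [this]
    simp [Multiset.map_const', Multiset.sum_replicate]
  obtain ⟨v, hvA, hmin⟩ := A.exists_min_image (fun y => dOn H A y) hne
  set C : Finset V := insert v (A.filter (fun z => H.Adj v z)) with hCdef
  have hCsub : C ⊆ A := Finset.insert_subset hvA (Finset.filter_subset _ _)
  set B : Finset V := A \ C with hBdef
  have hvC : v ∈ C := Finset.mem_insert_self _ _
  have hvB : v ∉ B := by simp [hBdef, hCdef]
  have hBss : B ⊂ A := Finset.ssubset_iff_of_subset Finset.sdiff_subset |>.2 ⟨v, hvA, hvB⟩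
  have hCcard : C.card = dOn H A v + 1 := by
    rw [hCdef, Finset.card_insert_of_notMem (by simp [H.irrefl]), dOn]
  have hnadjv : ∀ z ∈ B, ¬ H.Adj v z := by
    intro z hz hadj
    exact (Finset.mem_sdiff.1 hz).2
      (Finset.mem_insert_of_mem (Finset.mem_filter.2 ⟨Finset.sdiff_subset hz, hadj⟩))
  have hPne : 0 < Multiset.card P := by
    rcases Multiset.empty_or_exists_mem P with rfl | ⟨p, hp⟩
    · exfalso
      have : (dOn H A u) ∈ A.val.map (dOn H A) := Multiset.mem_map_of_mem _ hu
      rw [hdeg] at this; simp at this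
    · exact Multiset.card_pos.2 (fun h => by simp [h] at hp)
  -- key equality claims
  have key : (∀ y ∈ C, dOn H A y = dOn H A v) ∧ (∀ z ∈ B, dOn H B z = dOn H A z) := by
    by_contra hcon
    -- show the Caro-Wei sum on B exceeds P.card - 1
    have hsplit : ∑ y ∈ A, (1:ℚ)/(dOn H A y + 1)
        = ∑ y ∈ B, (1:ℚ)/(dOn H A y + 1) + ∑ y ∈ C, (1:ℚ)/(dOn H A y + 1) := by
      rw [hBdef, Finset.sum_sdiff hCsub]
    have htermC : ∀ y ∈ C, (1:ℚ)/(dOn H A y + 1) ≤ 1/(dOn H A v + 1) := by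
      intro y hy
      apply one_div_le_one_div_of_le (by positivity)
      exact_mod_cast Nat.add_le_add_right (hmin y (hCsub hy)) 1
    have htermB : ∀ z ∈ B, (1:ℚ)/(dOn H A z + 1) ≤ 1/(dOn H B z + 1) := by
      intro z hz
      apply one_div_le_one_div_of_le (by positivity)
      exact_mod_cast Nat.add_le_add_right (dOn_mono H Finset.sdiff_subset z) 1
    have hCle : ∑ y ∈ C, (1:ℚ)/(dOn H A y + 1) ≤ 1 := by
      calc ∑ y ∈ C, (1:ℚ)/(dOn H A y + 1) ≤ ∑ _y ∈ C, (1:ℚ)/(dOn H A v + 1) :=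
            Finset.sum_le_sum htermC
        _ = (dOn H A v + 1 : ℚ) * (1/(dOn H A v + 1)) := by
            rw [Finset.sum_const, hCcard]; push_cast; ring
        _ = 1 := by rw [mul_one_div]; exact div_self (by positivity)
    have hBle : ∑ z ∈ B, (1:ℚ)/(dOn H A z + 1) ≤ ∑ z ∈ B, (1:ℚ)/(dOn H B z + 1) :=
      Finset.sum_le_sum htermB
    have hgt : (P.card : ℚ) - 1 < ∑ z ∈ B, (1:ℚ)/(dOn H B z + 1) := by
      rcases not_and_or.1 hcon with h | h
      · -- some vertex in C has degree > δ : the C-sum is < 1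
        push_neg at h
        obtain ⟨y, hy, hyne⟩ := h
        have hylt : dOn H A v < dOn H A y := lt_of_le_of_ne (hmin y (hCsub hy)) (Ne.symm hyne)
        have hCs : ∑ y ∈ C, (1:ℚ)/(dOn H A y + 1) < 1 := by
          have hstrict : (1:ℚ)/(dOn H A y + 1) < 1/(dOn H A v + 1) := by
            apply one_div_lt_one_div_of_lt (by positivity)
            exact_mod_cast Nat.add_lt_add_right hylt 1
          calc ∑ y ∈ C, (1:ℚ)/(dOn H A y + 1)
              < ∑ _y ∈ C, (1:ℚ)/(dOn H A v + 1) :=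
                Finset.sum_lt_sum htermC ⟨y, hy, hstrict⟩
            _ = (dOn H A v + 1 : ℚ) * (1/(dOn H A v + 1)) := by
                rw [Finset.sum_const, hCcard]; push_cast; ring
            _ = 1 := by rw [mul_one_div]; exact div_self (by positivity)
        have := hsumA
        linarith
      · -- some vertex of B loses degree : its term strictly increases
        push_neg at h
        obtain ⟨z, hz, hzne⟩ := h
        have hzlt : dOn H B z < dOn H A z :=
          lt_of_le_of_ne (dOn_mono H Finset.sdiff_subset z) hzne
        have hBs : ∑ z ∈ B, (1:ℚ)/(dOn H A z + 1) < ∑ z ∈ B, (1:ℚ)/(dOn H B z + 1) := by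
          apply Finset.sum_lt_sum htermB
          refine ⟨z, hz, ?_⟩
          apply one_div_lt_one_div_of_lt (by positivity)
          exact_mod_cast Nat.add_lt_add_right hzlt 1
        linarith
    obtain ⟨s, hsB, hind, hsum⟩ := carowei H B
    have hscard : P.card ≤ s.card := by
      have : (P.card : ℚ) - 1 < s.card := lt_of_lt_of_le hgt hsum
      have : (P.card : ℚ) < s.card + 1 := by linarith
      exact_mod_cast Nat.lt_succ_iff.1 (by exact_mod_cast this)
    have hvs : v ∉ s := fun h => hvB (hsB h)
    have hsind : ∀ p ∈ insert v s, ∀ q ∈ insert v s, ¬ H.Adj p q := by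
      intro p hp q hq
      rcases Finset.mem_insert.1 hp with rfl | hp' <;> rcases Finset.mem_insert.1 hq with rfl | hq'
      · exact H.irrefl
      · exact hnadjv q (hsB hq')
      · intro h; exact hnadjv p (hsB hp') h.symm
      · exact hind p hp' q hq'
    have := hbound (insert v s)
      (Finset.insert_subset hvA (hsB.trans Finset.sdiff_subset)) hsind
    rw [Finset.card_insert_of_notMem hvs] at this
    omega
  obtain ⟨keyC, keyB⟩ := key
  -- each member of C has neighborhood (in A) exactly C minus itself
  have hfilter : ∀ y ∈ C, A.filter (fun z => H.Adj y z) = C.erase y := by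
    intro y hy
    have hsub : A.filter (fun z => H.Adj y z) ⊆ C.erase y := by
      intro z hz
      obtain ⟨hzA, hyz⟩ := Finset.mem_filter.1 hz
      have hzC : z ∈ C := by
        by_contra hzC
        have hzB : z ∈ B := Finset.mem_sdiff.2 ⟨hzA, hzC⟩
        have hlt : dOn H B z < dOn H A z := by
          apply Finset.card_lt_card
          constructor
          · exact Finset.filter_subset_filter _ Finset.sdiff_subset
          · intro hsup
            have hyB : y ∈ A.filter (fun p => H.Adj z p) :=
              Finset.mem_filter.2 ⟨hCsub hy, hyz.symm⟩
            have := Finset.mem_filter.1 (hsup hyB)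
            exact (Finset.mem_sdiff.1 this.1).2 hy
        have := keyB z hzB
        omega
      exact Finset.mem_erase.2 ⟨fun h => H.irrefl (h ▸ hyz), hzC⟩
    apply Finset.eq_of_subset_of_card_le hsub
    have h2 : dOn H A y = (A.filter (fun z => H.Adj y z)).card := rfl
    rw [← h2, keyC y hy, Finset.card_erase_of_mem hy, hCcard]
    omega
  have hCclique : ∀ y ∈ C, ∀ z ∈ C, y ≠ z → H.Adj y z := by
    intro y hy z hz hyz
    have : z ∈ C.erase y := Finset.mem_erase.2 ⟨hyz.symm, hz⟩
    rw [← hfilter y hy] at this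
    exact (Finset.mem_filter.1 this).2
  have hcross : ∀ y ∈ C, ∀ z ∈ B, ¬ H.Adj y z := by
    intro y hy z hz hadj
    have : z ∈ A.filter (fun p => H.Adj y p) :=
      Finset.mem_filter.2 ⟨Finset.sdiff_subset hz, hadj⟩
    rw [hfilter y hy] at this
    exact (Finset.mem_sdiff.1 hz).2 (Finset.erase_subset _ _ this)
  by_cases hwC : w ∈ C
  · have huC : u ∈ C := by
      have : u ∈ A.filter (fun z => H.Adj w z) := Finset.mem_filter.2 ⟨hu, huw.symm⟩
      rw [hfilter w hwC] at this
      exact Finset.erase_subset _ _ this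
    have hxC : x ∈ C := by
      have : x ∈ A.filter (fun z => H.Adj w z) := Finset.mem_filter.2 ⟨hx, hwx⟩
      rw [hfilter w hwC] at this
      exact Finset.erase_subset _ _ this
    exact hCclique u huC x hxC hux
  · have hwB : w ∈ B := Finset.mem_sdiff.2 ⟨hw, hwC⟩
    have huB : u ∈ B := by
      refine Finset.mem_sdiff.2 ⟨hu, fun huC => ?_⟩
      exact hcross u huC w hwB huw
    have hxB : x ∈ B := by
      refine Finset.mem_sdiff.2 ⟨hx, fun hxC => ?_⟩
      exact hcross x hxC w hwB hwx.symm
    -- set up the recursion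
    set δ := dOn H A v with hδ
    have hδP : δ + 1 ∈ P := by
      have hδmem : δ ∈ A.val.map (dOn H A) := Multiset.mem_map_of_mem _ hvA
      rw [hdeg] at hδmem
      obtain ⟨p, hp, hmem⟩ := Multiset.mem_bind.1 hδmem
      have h1 : δ = p - 1 := Multiset.eq_of_mem_replicate hmem
      have h2 : 0 < p := hPpos p hp
      have : δ + 1 = p := by omega
      rwa [this]
    have hAval : A.val = C.val + B.val := by
      have h1 : C.val ≤ A.val := Finset.val_le_iff.2 hCsub
      have h2 : B.val = A.val - C.val := Finset.sdiff_val A C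
      rw [h2, add_tsub_cancel_of_le h1]
    have hmapC : C.val.map (dOn H A) = Multiset.replicate (δ + 1) δ := by
      apply Multiset.eq_replicate.2
      constructor
      · rw [Multiset.card_map]; exact hCcard
      · intro d hd
        obtain ⟨y, hy, rfl⟩ := Multiset.mem_map.1 hd
        exact keyC y hy
    have hmapB : B.val.map (dOn H B)
        = (P.erase (δ + 1)).bind (fun p => Multiset.replicate p (p-1)) := by
      have h1 : B.val.map (dOn H B) = B.val.map (dOn H A) :=
        Multiset.map_congr rfl (fun z hz => keyB z hz)
      have h2 : Multiset.replicate (δ + 1) δ + B.val.map (dOn H A)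
          = Multiset.replicate (δ + 1) δ
            + (P.erase (δ + 1)).bind (fun p => Multiset.replicate p (p-1)) := by
        have h3 : A.val.map (dOn H A) = C.val.map (dOn H A) + B.val.map (dOn H A) := by
          rw [hAval, Multiset.map_add]
        have h4 : P.bind (fun p => Multiset.replicate p (p-1))
            = Multiset.replicate (δ + 1) δ
              + (P.erase (δ + 1)).bind (fun p => Multiset.replicate p (p-1)) := by
          conv_lhs => rw [← Multiset.cons_erase hδP]
          rw [Multiset.cons_bind]
          simp
        conv_lhs => rw [← hmapC, ← h3, hdeg, h4]
      rw [h1]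
      exact add_left_cancel h2
    have hbound' : ∀ s : Finset V, s ⊆ B → (∀ p ∈ s, ∀ q ∈ s, ¬ H.Adj p q) →
        s.card ≤ (P.erase (δ + 1)).card := by
      intro s hsB hind
      have hvs : v ∉ s := fun h => hvB (hsB h)
      have hsind : ∀ p ∈ insert v s, ∀ q ∈ insert v s, ¬ H.Adj p q := by
        intro p hp q hq
        rcases Finset.mem_insert.1 hp with rfl | hp' <;>
          rcases Finset.mem_insert.1 hq with rfl | hq'
        · exact H.irrefl
        · exact hnadjv q (hsB hq')
        · intro h; exact hnadjv p (hsB hp') h.symm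
        · exact hind p hp' q hq'
      have := hbound (insert v s)
        (Finset.insert_subset hvA (hsB.trans Finset.sdiff_subset)) hsind
      rw [Finset.card_insert_of_notMem hvs] at this
      rw [Multiset.card_erase_of_mem hδP, Nat.pred_eq_sub_one]
      omega
    exact ih B hBss (P.erase (δ + 1))
      (fun p hp => hPpos p (Multiset.mem_of_mem_erase hp))
      hmapB hbound' u huB w hwB x hxB huw hwx hux

section Assembly

variable {k : ℕ} (a : Fin k → ℕ)

lemma degree_irrel {W : Type*} (G : SimpleGraph W) (v : W)
    (i1 i2 : Fintype (G.neighborSet v)) :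
    @SimpleGraph.degree _ G v i1 = @SimpleGraph.degree _ G v i2 := by
  cases Subsingleton.elim i1 i2
  rfl

lemma card_fiber_cmp (i : Fin k) :
    ((Finset.univ : Finset (Σ i : Fin k, Fin (a i))).filter (fun w => w.1 = i)).card
      = a i := by
  have himg : (Finset.univ : Finset (Σ i : Fin k, Fin (a i))).filter (fun w => w.1 = i)
      = Finset.univ.image (fun x : Fin (a i) => (⟨i, x⟩ : Σ i : Fin k, Fin (a i))) := by
    ext ⟨j, y⟩
    simp only [Finset.mem_filter, Finset.mem_univ, true_and, Finset.mem_image]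
    constructor
    · rintro rfl
      exact ⟨y, rfl⟩
    · rintro ⟨x, hx⟩
      cases hx
      rfl
  rw [himg, Finset.card_image_of_injective _ sigma_mk_injective]
  simp

lemma degree_cmp (v : Σ i : Fin k, Fin (a i))
    [Fintype ((completeMultipartiteGraph fun i => Fin (a i)).neighborSet v)] :
    (completeMultipartiteGraph fun i => Fin (a i)).degree v
      = Fintype.card (Σ i : Fin k, Fin (a i)) - a v.1 := by
  have h1 : (completeMultipartiteGraph fun i => Fin (a i)).neighborFinset v
      = Finset.univ.filter (fun w => ¬ (w.1 = v.1)) := by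
    ext w
    simp [SimpleGraph.mem_neighborFinset, ne_comm]
  rw [SimpleGraph.degree, h1, Finset.filter_not, Finset.card_sdiff_of_subset (Finset.filter_subset _ _),
    Finset.card_univ, card_fiber_cmp]

lemma degSeq_cmp :
    degSeq (completeMultipartiteGraph fun i => Fin (a i))
      = (Finset.univ : Finset (Fin k)).val.bind
          (fun i => Multiset.replicate (a i)
            (Fintype.card (Σ i : Fin k, Fin (a i)) - a i)) := by
  have huniv : (Finset.univ : Finset (Σ i : Fin k, Fin (a i))).val
      = (Finset.univ : Finset (Fin k)).val.bind
          (fun i => (Finset.univ : Finset (Fin (a i))).val.map (Sigma.mk i)) := by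
    rw [← Finset.univ_sigma_univ]
    rfl
  rw [degSeq, huniv, Multiset.map_bind]
  apply Multiset.bind_congr
  intro i _
  rw [Multiset.map_map]
  refine Multiset.eq_replicate.2 ⟨by simp, ?_⟩
  intro b hb
  obtain ⟨x, _, rfl⟩ := Multiset.mem_map.1 hb
  exact Eq.trans (degree_irrel _ _ _ _) (degree_cmp a ⟨i, x⟩)

end Assembly

theorem cliqueNum_ge_of_not_iso_completeMultipartite {k : ℕ} (a : Fin k → ℕ)
    (ha : ∀ i, 1 ≤ a i) {V : Type} [Fintype V] (G : SimpleGraph V)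
    (hdeg : degSeq G = degSeq (completeMultipartiteGraph fun i => Fin (a i)))
    (hniso : ¬ Nonempty (G ≃g completeMultipartiteGraph fun i => Fin (a i))) :
    k + 1 ≤ G.cliqueNum := by
  by_contra hlt
  push_neg at hlt
  apply hniso
  set N := Fintype.card (Σ i : Fin k, Fin (a i)) with hN
  have hcardV : Fintype.card V = N := by
    have h := congrArg Multiset.card hdeg
    simp [degSeq] at h
    rw [hN, Fintype.card_sigma]
    simpa using h
  have haN : ∀ i, a i ≤ N := by
    intro i
    have h1 : a i = Fintype.card (Fin (a i)) := by simp
    rw [hN, h1]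
    exact Fintype.card_le_of_injective
      (fun x : Fin (a i) => (⟨i, x⟩ : Σ j, Fin (a j)))
      (fun x y h => by simpa using h)
  set H := Gᶜ with hH
  have hseqH : degSeq H = (Finset.univ.val.map a).bind
      (fun p => Multiset.replicate p (p - 1)) := by
    have h1 : degSeq H = (degSeq G).map (fun d => N - 1 - d) := by
      rw [degSeq, degSeq, Multiset.map_map]
      apply Multiset.map_congr rfl
      intro v _
      simp only [Function.comp_apply]
      rw [hH, SimpleGraph.degree_compl, hcardV]
    rw [h1, hdeg, degSeq_cmp a, Multiset.map_bind, Multiset.bind_map]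
    apply Multiset.bind_congr
    intro i _
    rw [Multiset.map_replicate]
    congr 1
    have h2 := ha i
    have h3 := haN i
    omega
  have hdOn : ∀ (v : V) (inst : Fintype (H.neighborSet v)),
      dOn H Finset.univ v = @SimpleGraph.degree _ H v inst := by
    intro v inst
    rw [dOn]
    have h1 : (Finset.univ.filter (fun w => H.Adj v w))
        = @SimpleGraph.neighborFinset _ H v inst := by
      ext w
      simp [SimpleGraph.mem_neighborFinset]
    rw [Finset.filter_congr_decidable, h1]
    rfl
  have hdeg' : Finset.univ.val.map (dOn H Finset.univ)
      = (Finset.univ.val.map a).bind (fun p => Multiset.replicate p (p - 1)) := by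
    rw [← hseqH, degSeq]
    exact Multiset.map_congr rfl (fun v _ => hdOn v _)
  have hpos : ∀ p ∈ Finset.univ.val.map a, 0 < p := by
    intro p hp
    obtain ⟨i, _, rfl⟩ := Multiset.mem_map.1 hp
    exact ha i
  have hbound : ∀ s : Finset V, s ⊆ Finset.univ →
      (∀ u ∈ s, ∀ w ∈ s, ¬ H.Adj u w) → s.card ≤ (Finset.univ.val.map a).card := by
    intro s _ hind
    have hclique : G.IsClique s := by
      intro u hu v hv huv
      by_contra hn
      exact hind u hu v hv ((G.compl_adj u v).2 ⟨huv, hn⟩)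
    have h1 : s.card ≤ G.cliqueNum :=
      SimpleGraph.IsClique.card_le_cliqueNum (tc := hclique)
    have h2 : (Finset.univ.val.map a).card = k := by simp
    omega
  have htrans := structureLemma H Finset.univ (Finset.univ.val.map a) hpos hdeg' hbound
  -- the relation `equal or adjacent in H` is an equivalence relation
  let r : V → V → Prop := fun u v => u = v ∨ H.Adj u v
  have hrsymm : ∀ {u v}, r u v → r v u := by
    rintro u v (rfl | h)
    · exact Or.inl rfl
    · exact Or.inr h.symm
  have hrtrans : ∀ {u v w}, r u v → r v w → r u w := by
    rintro u v w (rfl | h1) h2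
    · exact h2
    rcases h2 with rfl | h2
    · exact Or.inr h1
    by_cases huw : u = w
    · exact Or.inl huw
    · exact Or.inr (htrans u (Finset.mem_univ u) v (Finset.mem_univ v) w
        (Finset.mem_univ w) h1 h2 huw)
  let st : Setoid V := ⟨r, fun _ => Or.inl rfl, hrsymm, hrtrans⟩
  -- fibers of the quotient map
  let sz : Quotient st → ℕ :=
    fun q => (Finset.univ.filter (fun v => Quotient.mk st v = q)).card
  have hfiber : ∀ w : V,
      Finset.univ.filter (fun v => Quotient.mk st v = Quotient.mk st w)
        = insert w (Finset.univ.filter (fun v => H.Adj w v)) := by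
    intro w
    ext v
    simp only [Finset.mem_filter, Finset.mem_univ, true_and, Finset.mem_insert]
    rw [Quotient.eq]
    show r v w ↔ _
    constructor
    · rintro (rfl | h)
      · exact Or.inl rfl
      · exact Or.inr h.symm
    · rintro (rfl | h)
      · exact Or.inl rfl
      · exact Or.inr h.symm
  have hszmk : ∀ w : V, sz (Quotient.mk st w) = dOn H Finset.univ w + 1 := by
    intro w
    show (Finset.univ.filter (fun v => Quotient.mk st v = Quotient.mk st w)).card = _
    rw [hfiber w, Finset.card_insert_of_notMem (by simp [H.irrefl])]
    simp only [dOn]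
    congr!
  -- counting fibers of each size
  have hcount1 : ∀ d, Multiset.count d (Finset.univ.val.map (dOn H Finset.univ))
      = (Finset.univ.filter (fun v => dOn H Finset.univ v = d)).card := by
    intro d
    rw [Multiset.count_map, Finset.card_def, Finset.filter_val]
    congr 1
    apply Multiset.filter_congr
    intro x _
    exact eq_comm
  have hcount2 : ∀ d,
      Multiset.count d ((Finset.univ.val.map a).bind
        (fun p => Multiset.replicate p (p-1)))
      = (d+1) * (Finset.univ.filter (fun i => a i = d + 1)).card := by
    intro d
    rw [Multiset.count_bind, Multiset.map_map]
    have h1 : ∀ i ∈ (Finset.univ : Finset (Fin k)).val,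
        ((fun p => Multiset.count d (Multiset.replicate p (p-1))) ∘ a) i
        = if a i = d + 1 then d + 1 else 0 := by
      intro i _
      simp only [Function.comp_apply, Multiset.count_replicate]
      have h2 := ha i
      by_cases h : a i = d + 1
      · have h3 : a i - 1 = d := by omega
        rw [if_pos h3, if_pos h]
        exact h
      · have h3 : ¬ (a i - 1 = d) := by omega
        rw [if_neg h3, if_neg h]
    rw [Multiset.map_congr rfl h1]
    show ∑ i, (if a i = d+1 then d+1 else 0) = _
    rw [← Finset.sum_filter, Finset.sum_const, smul_eq_mul, mul_comm]
  have hcount3 : ∀ d, (Finset.univ.filter (fun v => dOn H Finset.univ v = d)).card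
      = (d+1) * (Finset.univ.filter (fun q : Quotient st => sz q = d + 1)).card := by
    intro d
    have hS : Finset.univ.filter (fun v : V => dOn H Finset.univ v = d)
        = Finset.univ.filter (fun v => sz (Quotient.mk st v) = d + 1) := by
      apply Finset.filter_congr
      intro v _
      rw [hszmk v]
      exact ⟨fun h => by omega, fun h => by omega⟩
    rw [hS]
    rw [Finset.card_eq_sum_card_fiberwise (f := fun v => Quotient.mk st v)
        (t := Finset.univ.filter (fun q => sz q = d+1))
        (fun v hv => by
          simp only [Finset.mem_coe, Finset.mem_filter, Finset.mem_univ, true_and] at hv ⊢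
          exact hv)]
    have h4 : ∀ q ∈ Finset.univ.filter (fun q : Quotient st => sz q = d+1),
        ((Finset.univ.filter (fun v => sz (Quotient.mk st v) = d + 1)).filter
          (fun v => Quotient.mk st v = q)).card = d + 1 := by
      intro q hq
      have hq2 := (Finset.mem_filter.1 hq).2
      have h5 : (Finset.univ.filter (fun v => sz (Quotient.mk st v) = d + 1)).filter
          (fun v => Quotient.mk st v = q)
          = Finset.univ.filter (fun v => Quotient.mk st v = q) := by
        ext v
        simp only [Finset.mem_filter, Finset.mem_univ, true_and]
        constructor
        · rintro ⟨_, h⟩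
          exact h
        · intro h
          exact ⟨h ▸ hq2, h⟩
      rw [h5]
      exact hq2
    rw [Finset.sum_congr rfl h4, Finset.sum_const, smul_eq_mul, mul_comm]
  -- the multiset of fiber sizes matches the multiset of the `a i`
  have hcnt : ∀ m, (Finset.univ.filter (fun q : Quotient st => sz q = m)).card
      = (Finset.univ.filter (fun i => a i = m)).card := by
    intro m
    cases m with
    | zero =>
      have h1 : Finset.univ.filter (fun q : Quotient st => sz q = 0) = ∅ := by
        apply Finset.filter_eq_empty_iff.2
        intro q _
        induction q using Quotient.ind with
        | _ w => rw [hszmk w]; omega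
      have h2 : Finset.univ.filter (fun i => a i = 0) = ∅ := by
        apply Finset.filter_eq_empty_iff.2
        intro i _
        have := ha i
        omega
      rw [h1, h2]
      rfl
    | succ d =>
      have h1 := (hcount1 d).symm.trans ((congrArg (Multiset.count d) hdeg').trans (hcount2 d))
      rw [hcount3 d] at h1
      exact Nat.eq_of_mul_eq_mul_left (Nat.succ_pos d) h1
  -- build the isomorphism
  have hcard : ∀ m : ℕ, Fintype.card {q : Quotient st // sz q = m}
      = Fintype.card {i : Fin k // a i = m} := by
    intro m
    rw [Fintype.card_subtype, Fintype.card_subtype, hcnt m]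
  let σ : Quotient st ≃ Fin k :=
    Equiv.ofFiberEquiv (f := sz) (g := a) (fun m => Fintype.equivOfCardEq (hcard m))
  have hσ : ∀ q, a (σ q) = sz q := fun q => Equiv.ofFiberEquiv_map _ q
  have hFcard : ∀ q : Quotient st,
      Fintype.card {v : V // Quotient.mk st v = q} = a (σ q) := by
    intro q
    rw [hσ q, Fintype.card_subtype]
  let F : ∀ q : Quotient st, {v : V // Quotient.mk st v = q} ≃ Fin (a (σ q)) :=
    fun q => Fintype.equivFinOfCardEq (hFcard q)
  let e : V ≃ Σ i : Fin k, Fin (a i) :=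
    ((Equiv.sigmaFiberEquiv (fun v => Quotient.mk st v)).symm).trans
      (Equiv.sigmaCongr σ F)
  have hfst : ∀ v : V, (e v).1 = σ (Quotient.mk st v) := fun v => rfl
  have hadjiff : ∀ u v : V, Quotient.mk st u ≠ Quotient.mk st v ↔ G.Adj u v := by
    intro u v
    rw [Ne, Quotient.eq]
    show ¬ r u v ↔ _
    constructor
    · intro h
      have hne : u ≠ v := fun he => h (Or.inl he)
      have h2 : ¬ H.Adj u v := fun hx => h (Or.inr hx)
      rw [hH, SimpleGraph.compl_adj] at h2
      push_neg at h2
      exact h2 hne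
    · rintro hadj (rfl | h)
      · exact G.irrefl hadj
      · exact ((G.compl_adj u v).1 h).2 hadj
  refine ⟨⟨e, ?_⟩⟩
  intro u v
  show (e u).1 ≠ (e v).1 ↔ G.Adj u v
  rw [hfst u, hfst v]
  rw [← hadjiff u v]
  exact σ.injective.ne_iff
end

section
/- For any simple graph G, the independence number satisfies α(G) ≥ Σ_{v ∈ V(G)} 1/(d(v)+1), where d(v) is the degree of v. -/
open SimpleGraph

section CaroWeiAux
open Finset

open scoped Classical in
lemma cw_swap_card {V : Type} [Fintype V] (n : ℕ)
    (Nv : Finset V) (v w : V) (hv : v ∈ Nv) (hw : w ∈ Nv) :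
    (univ.filter fun σ : V ≃ Fin n => ∀ u ∈ Nv, u ≠ w → σ w < σ u).card
      = (univ.filter fun σ : V ≃ Fin n => ∀ u ∈ Nv, u ≠ v → σ v < σ u).card := by
  apply Finset.card_bij' (fun σ _ => (Equiv.swap v w).trans σ)
    (fun σ _ => (Equiv.swap v w).trans σ)
  · intro σ hσ
    simp only [mem_filter, mem_univ, true_and] at hσ ⊢
    intro u hu huv
    simp only [Equiv.trans_apply, Equiv.swap_apply_left]
    by_cases hvw : v = w
    · subst hvw
      simpa using hσ u hu huv
    by_cases huw : u = w
    · subst huw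
      simpa [Equiv.swap_apply_right] using hσ v hv (hvw)
    · rw [Equiv.swap_apply_of_ne_of_ne huv huw]
      exact hσ u hu huw
  · intro σ hσ
    simp only [mem_filter, mem_univ, true_and] at hσ ⊢
    intro u hu huw
    simp only [Equiv.trans_apply, Equiv.swap_apply_right]
    by_cases hvw : v = w
    · subst hvw
      simpa using hσ u hu huw
    by_cases huv : u = v
    · subst huv
      simpa [Equiv.swap_apply_left] using hσ w hw (fun h => hvw h.symm)
    · rw [Equiv.swap_apply_of_ne_of_ne huv huw]
      exact hσ u hu huv
  · intro σ _
    ext x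
    simp [Equiv.swap_apply_self]
  · intro σ _
    ext x
    simp [Equiv.swap_apply_self]

open scoped Classical in
lemma cw_partition {V : Type} [Fintype V] (n : ℕ) (hn : Fintype.card V = n)
    (Nv : Finset V) (v : V) (hv : v ∈ Nv) :
    Nv.card * (univ.filter fun σ : V ≃ Fin n => ∀ u ∈ Nv, u ≠ v → σ v < σ u).card = Nat.factorial n := by
  have hne : Nv.Nonempty := ⟨v, hv⟩
  have hcard : Fintype.card (V ≃ Fin n) = Nat.factorial n := by
    have e : V ≃ Fin n := Fintype.equivFinOfCardEq hn
    rw [Fintype.card_equiv e, hn]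
  set f : (V ≃ Fin n) → V := fun σ => σ.symm ((Nv.image σ).min' (hne.image σ)) with hf
  have hmem : ∀ σ : V ≃ Fin n, f σ ∈ Nv := by
    intro σ
    have := Finset.min'_mem (Nv.image σ) (hne.image σ)
    obtain ⟨u, hu, hu'⟩ := Finset.mem_image.mp this
    simpa [hf, ← hu'] using hu
  have hfiber : ∀ w ∈ Nv, (univ.filter fun σ : V ≃ Fin n => f σ = w)
      = (univ.filter fun σ : V ≃ Fin n => ∀ u ∈ Nv, u ≠ w → σ w < σ u) := by
    intro w hw
    ext σ
    simp only [mem_filter, mem_univ, true_and]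
    constructor
    · intro h u hu huw
      have hle : (Nv.image σ).min' (hne.image σ) ≤ σ u :=
        Finset.min'_le _ _ (Finset.mem_image_of_mem σ hu)
      have hσw : σ w = (Nv.image σ).min' (hne.image σ) := by
        rw [← h]; simp [hf]
      rcases lt_or_eq_of_le hle with h' | h'
      · rw [hσw]; exact h'
      · exfalso
        have : u = w := by
          apply σ.injective; rw [hσw, h']
        exact huw this
    · intro h
      have hmin : (Nv.image σ).min' (hne.image σ) = σ w := by
        obtain ⟨u, hu, hu'⟩ := Finset.mem_image.mp (Finset.min'_mem (Nv.image σ) (hne.image σ))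
        by_cases huw : u = w
        · rw [← hu', huw]
        · have h1 := h u hu huw
          have h2 : σ u ≤ σ w := by
            rw [hu']
            exact Finset.min'_le _ _ (Finset.mem_image_of_mem σ hw)
          exact absurd (lt_of_lt_of_le h1 h2) (lt_irrefl _)
      simp [hf, hmin]
  calc Nv.card * (univ.filter fun σ : V ≃ Fin n => ∀ u ∈ Nv, u ≠ v → σ v < σ u).card
      = ∑ w ∈ Nv, (univ.filter fun σ : V ≃ Fin n => ∀ u ∈ Nv, u ≠ w → σ w < σ u).card := by
        rw [Finset.sum_congr rfl (fun w hw => cw_swap_card n Nv v w hv hw)]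
        simp [mul_comm]
    _ = ∑ w ∈ Nv, (univ.filter fun σ : V ≃ Fin n => f σ = w).card := by
        refine Finset.sum_congr rfl fun w hw => ?_
        rw [hfiber w hw]
    _ = (univ : Finset (V ≃ Fin n)).card := by
        rw [← Finset.card_eq_sum_card_fiberwise (fun σ _ => hmem σ)]
    _ = Nat.factorial n := by rw [Finset.card_univ, hcard]

open scoped Classical in
theorem caro_wei {V : Type} [Fintype V] (G : SimpleGraph V) :
    (∑ v : V, (1 : ℝ) / (G.degree v + 1)) ≤ _root_.indepNum G := by
  set n := Fintype.card V with hn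
  set S : (V ≃ Fin n) → Finset V :=
    fun σ => univ.filter (fun v => ∀ u ∈ G.neighborFinset v, σ v < σ u) with hS
  set c : V → ℕ :=
    fun v => (univ.filter fun σ : V ≃ Fin n => ∀ u ∈ G.neighborFinset v, σ v < σ u).card with hc
  have hindep : ∀ σ, (S σ).card ≤ _root_.indepNum G := by
    intro σ
    apply le_csSup
    · refine ⟨Fintype.card V, ?_⟩
      rintro m ⟨s, rfl, -⟩
      exact (s.card_le_univ).trans_eq Finset.card_univ
    · refine ⟨S σ, rfl, ?_⟩
      intro a ha b hb hab hadj
      simp only [hS, mem_filter, mem_univ, true_and] at ha hb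
      have h1 := ha b (by rwa [SimpleGraph.mem_neighborFinset])
      have h2 := hb a (by rw [SimpleGraph.mem_neighborFinset]; exact hadj.symm)
      exact absurd (h1.trans h2) (lt_irrefl _)
  have hcount : ∀ v : V, (G.degree v + 1) * c v = Nat.factorial n := by
    intro v
    have hvmem : v ∈ insert v (G.neighborFinset v) := mem_insert_self _ _
    have key := cw_partition n rfl (insert v (G.neighborFinset v)) v hvmem
    have hcard : (insert v (G.neighborFinset v)).card = G.degree v + 1 := by
      rw [Finset.card_insert_of_notMem (by simp), G.card_neighborFinset_eq_degree]
    rw [hcard] at key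
    have hpred : (univ.filter fun σ : V ≃ Fin n =>
          ∀ u ∈ insert v (G.neighborFinset v), u ≠ v → σ v < σ u)
        = (univ.filter fun σ : V ≃ Fin n => ∀ u ∈ G.neighborFinset v, σ v < σ u) := by
      ext σ
      simp only [mem_filter, mem_univ, true_and]
      constructor
      · intro h u hu
        have huv : u ≠ v := by
          intro h'; subst h'
          exact G.irrefl ((SimpleGraph.mem_neighborFinset _ _ _).mp hu)
        exact h u (mem_insert_of_mem hu) huv
      · intro h u hu huv
        rcases mem_insert.mp hu with h' | h'
        · exact absurd h' huv
        · exact h u h'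
    rw [← key, hpred]
  have hsum : ∑ σ : V ≃ Fin n, (S σ).card = ∑ v : V, c v := by
    simp only [hS, hc, Finset.card_filter]
    rw [Finset.sum_comm]
  have hF : (0:ℝ) < (Nat.factorial n : ℝ) := by
    exact_mod_cast Nat.factorial_pos n
  have step1 : ∀ v : V, (1:ℝ)/(G.degree v + 1) = (c v : ℝ) / (Nat.factorial n : ℝ) := by
    intro v
    have h' : ((G.degree v : ℝ) + 1) * (c v : ℝ) = (Nat.factorial n : ℝ) := by
      exact_mod_cast hcount v
    have hd : (0:ℝ) < (G.degree v : ℝ) + 1 := by positivity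
    rw [div_eq_div_iff hd.ne' hF.ne']
    linarith [h']
  have hle : (∑ v : V, (c v : ℝ)) ≤ (Nat.factorial n : ℝ) * (_root_.indepNum G : ℝ) := by
    have h1 : ∑ σ : V ≃ Fin n, (S σ).card ≤ Fintype.card (V ≃ Fin n) * _root_.indepNum G := by
      calc ∑ σ : V ≃ Fin n, (S σ).card ≤ ∑ σ : V ≃ Fin n, _root_.indepNum G :=
            Finset.sum_le_sum fun σ _ => hindep σ
        _ = Fintype.card (V ≃ Fin n) * _root_.indepNum G := by
            rw [Finset.sum_const, Finset.card_univ, smul_eq_mul]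
    rw [hsum] at h1
    have h2 : Fintype.card (V ≃ Fin n) = Nat.factorial n := by
      rw [Fintype.card_equiv (Fintype.equivFinOfCardEq rfl)]
    rw [h2] at h1
    exact_mod_cast h1
  calc (∑ v : V, (1 : ℝ) / (G.degree v + 1))
      = ∑ v : V, (c v : ℝ) / (Nat.factorial n : ℝ) := Finset.sum_congr rfl fun v _ => step1 v
    _ = (∑ v : V, (c v : ℝ)) / (Nat.factorial n : ℝ) := by rw [Finset.sum_div]
    _ ≤ ((Nat.factorial n : ℝ) * (_root_.indepNum G : ℝ)) / (Nat.factorial n : ℝ) :=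
        div_le_div_of_nonneg_right hle hF.le
    _ = (_root_.indepNum G : ℝ) := by field_simp

end CaroWeiAux
end

section
/- Let G be a simple graph in which every vertex has degree at most a-1, G has no connected component that is a clique on a vertices, and G has exactly ca vertices (c ≥ 1). Then α(G) ≥ c+1. -/
open SimpleGraph

open scoped Classical in
lemma greedy_indep {V : Type} [Fintype V] (G : SimpleGraph V) {a : ℕ} (ha : 1 ≤ a)
    (hdeg : ∀ v : V, G.degree v ≤ a - 1) (t : Finset V) :
    ∃ s : Finset V, s ⊆ t ∧ (∀ u ∈ s, ∀ v ∈ s, u ≠ v → ¬ G.Adj u v) ∧ t.card ≤ a * s.card := by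
  induction t using Finset.strongInduction with
  | _ t ih =>
    rcases t.eq_empty_or_nonempty with rfl | ⟨v, hv⟩
    · exact ⟨∅, by simp⟩
    · set X : Finset V := insert v (G.neighborFinset v) with hX
      have hXcard : X.card ≤ a := by
        have := hdeg v
        have h1 : X.card ≤ (G.neighborFinset v).card + 1 := Finset.card_insert_le _ _
        have h2 : (G.neighborFinset v).card = G.degree v := G.card_neighborFinset_eq_degree v
        omega
      have hvX : v ∈ X := Finset.mem_insert_self _ _
      have hss : t \ X ⊂ t :=
        (Finset.ssubset_iff_of_subset (Finset.sdiff_subset)).mpr ⟨v, hv, by simp [hvX]⟩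
      obtain ⟨s, hst, hind, hcard⟩ := ih (t \ X) hss
      have hvs : v ∉ s := fun h => (Finset.mem_sdiff.mp (hst h)).2 hvX
      refine ⟨insert v s, ?_, ?_, ?_⟩
      · intro x hx
        rcases Finset.mem_insert.mp hx with rfl | hx
        · exact hv
        · exact (Finset.mem_sdiff.mp (hst hx)).1
      · have hnadj : ∀ w ∈ s, ¬ G.Adj v w := fun w hw hadj =>
          (Finset.mem_sdiff.mp (hst hw)).2
            (Finset.mem_insert_of_mem ((G.mem_neighborFinset v w).mpr hadj))
        intro x hx y hy hxy hadj
        rcases Finset.mem_insert.mp hx with hx' | hx' <;>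
          rcases Finset.mem_insert.mp hy with hy' | hy'
        · exact hxy (hx'.trans hy'.symm)
        · subst hx'; exact hnadj y hy' hadj
        · subst hy'; exact hnadj x hx' hadj.symm
        · exact hind x hx' y hy' hxy hadj
      · rw [Finset.card_insert_of_notMem hvs, Nat.mul_succ]
        have : t.card ≤ (t \ X).card + X.card := by
          calc t.card ≤ (t \ X ∪ X).card := Finset.card_le_card (fun x hx => by
                by_cases h : x ∈ X <;> simp [h, hx])
          _ ≤ (t \ X).card + X.card := Finset.card_union_le _ _
        omega

open scoped Classical in
lemma reach_eq_or_adj {V : Type} [Fintype V] (G : SimpleGraph V)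
    (hp : ∀ x y z : V, x ≠ y → G.Adj x z → G.Adj y z → G.Adj x y) :
    ∀ (x y : V), G.Reachable x y → x = y ∨ G.Adj x y := by
  intro x y hr
  obtain ⟨p⟩ := hr
  induction p with
  | nil => exact Or.inl rfl
  | @cons x z y h p ih =>
    rcases ih with rfl | hzy
    · exact Or.inr h
    · by_cases hxy : x = y
      · exact Or.inl hxy
      · exact Or.inr (hp x y z hxy h hzy.symm)

open scoped Classical in
theorem indepNum_ge_of_no_clique_component {a c : ℕ} (ha : 1 ≤ a) (hc : 1 ≤ c)
    {V : Type} [Fintype V] (G : SimpleGraph V)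
    (hdeg : ∀ v : V, G.degree v ≤ a - 1)
    (hcard : Fintype.card V = c * a)
    (hnoclique : ¬ ∃ v : V, ({u | G.Reachable v u} : Set V).ncard = a ∧
        G.IsClique {u | G.Reachable v u}) :
    c + 1 ≤ _root_.indepNum G := by
  have haN : a ≤ Fintype.card V := by
    rw [hcard]; exact Nat.le_mul_of_pos_left a hc
  -- it suffices to find a large independent finset
  have finish : ∀ s : Finset V, (∀ u ∈ s, ∀ v ∈ s, u ≠ v → ¬ G.Adj u v) →
      c + 1 ≤ s.card → c + 1 ≤ _root_.indepNum G := by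
    intro s hind hle
    have hbdd : BddAbove {n | ∃ s : Finset V, s.card = n ∧
        ∀ u ∈ s, ∀ v ∈ s, u ≠ v → ¬ G.Adj u v} := by
      refine ⟨Fintype.card V, ?_⟩
      rintro n ⟨s, rfl, -⟩
      simpa using Finset.card_le_univ s
    exact hle.trans (le_csSup hbdd ⟨s, rfl, hind⟩)
  by_cases hreg : ∀ v : V, a ≤ G.degree v + 1
  · -- every vertex has degree exactly a - 1
    by_cases hpair : ∃ u w m : V, u ≠ w ∧ ¬ G.Adj u w ∧ G.Adj u m ∧ G.Adj w m
    · obtain ⟨u, w, m, huw, hnadjuw, hum, hwm⟩ := hpair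
      set X : Finset V := insert u (G.neighborFinset u) ∪ insert w (G.neighborFinset w) with hX
      have hcard1 : (insert u (G.neighborFinset u)).card ≤ a := by
        have h1 := Finset.card_insert_le u (G.neighborFinset u)
        have h2 := hdeg u
        rw [G.card_neighborFinset_eq_degree u] at h1
        omega
      have hcard2 : (insert w (G.neighborFinset w)).card ≤ a := by
        have h1 := Finset.card_insert_le w (G.neighborFinset w)
        have h2 := hdeg w
        rw [G.card_neighborFinset_eq_degree w] at h1
        omega
      have hXcard : X.card + 1 ≤ 2 * a := by
        have hinter : 0 < ((insert u (G.neighborFinset u)) ∩ (insert w (G.neighborFinset w))).card := by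
          refine Finset.card_pos.mpr ⟨m, Finset.mem_inter.mpr ⟨?_, ?_⟩⟩
          · exact Finset.mem_insert_of_mem ((G.mem_neighborFinset u m).mpr hum)
          · exact Finset.mem_insert_of_mem ((G.mem_neighborFinset w m).mpr hwm)
        have := Finset.card_union_add_card_inter (insert u (G.neighborFinset u))
          (insert w (G.neighborFinset w))
        have hXdef : X.card = ((insert u (G.neighborFinset u)) ∪ (insert w (G.neighborFinset w))).card := by rw [hX]
        omega
      obtain ⟨s, hst, hind, hsc⟩ := greedy_indep G ha hdeg (Finset.univ \ X)
      have htc : (Finset.univ \ X).card = Fintype.card V - X.card := by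
        rw [Finset.card_sdiff_of_subset (Finset.subset_univ X), Finset.card_univ]
      have hnu : ∀ z ∈ s, u ≠ z ∧ ¬ G.Adj u z := by
        intro z hz
        have hzX := (Finset.mem_sdiff.mp (hst hz)).2
        constructor
        · rintro rfl
          exact hzX (Finset.mem_union_left _ (Finset.mem_insert_self _ _))
        · intro hadj
          exact hzX (Finset.mem_union_left _
            (Finset.mem_insert_of_mem ((G.mem_neighborFinset u z).mpr hadj)))
      have hnw : ∀ z ∈ s, w ≠ z ∧ ¬ G.Adj w z := by
        intro z hz
        have hzX := (Finset.mem_sdiff.mp (hst hz)).2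
        constructor
        · rintro rfl
          exact hzX (Finset.mem_union_right _ (Finset.mem_insert_self _ _))
        · intro hadj
          exact hzX (Finset.mem_union_right _
            (Finset.mem_insert_of_mem ((G.mem_neighborFinset w z).mpr hadj)))
      refine finish (insert u (insert w s)) ?_ ?_
      · intro x hx y hy hxy hadj
        simp only [Finset.mem_insert] at hx hy
        rcases hx with rfl | rfl | hx <;> rcases hy with rfl | rfl | hy
        · exact hxy rfl
        · exact hnadjuw hadj
        · exact (hnu y hy).2 hadj
        · exact hnadjuw hadj.symm
        · exact hxy rfl
        · exact (hnw y hy).2 hadj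
        · exact (hnu x hx).2 hadj.symm
        · exact (hnw x hx).2 hadj.symm
        · exact hind x hx y hy hxy hadj
      · have hws : w ∉ s := fun h => (hnw w h).1 rfl
        have hus : u ∉ insert w s := by
          simp only [Finset.mem_insert]
          rintro (rfl | h)
          · exact huw rfl
          · exact (hnu u h).1 rfl
        rw [Finset.card_insert_of_notMem hus, Finset.card_insert_of_notMem hws]
        have hkey : a * c < a * (s.card + 1 + 1) := by
          have h1 : a * c = Fintype.card V := by rw [hcard, mul_comm]
          have h2 : a * (s.card + 1 + 1) = a * s.card + 2 * a := by ring
          rw [h1, h2]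
          omega
        have := Nat.lt_of_mul_lt_mul_left hkey
        omega
    · -- every component is a clique on a vertices : contradiction
      exfalso
      push_neg at hpair
      have hne : Nonempty V := by
        have : 0 < Fintype.card V := lt_of_lt_of_le ha haN
        exact Fintype.card_pos_iff.mp this
      obtain ⟨v⟩ := hne
      have key := reach_eq_or_adj G (fun x y z hxy hxz hyz => by
        by_contra hn
        exact hpair x y z hxy hn hxz hyz)
      refine hnoclique ⟨v, ?_, ?_⟩
      · have hSeq : ({u | G.Reachable v u} : Set V) = ↑(insert v (G.neighborFinset v)) := by
          ext u
          simp only [Set.mem_setOf_eq, Finset.coe_insert, Set.mem_insert_iff,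
            Finset.mem_coe, SimpleGraph.mem_neighborFinset]
          constructor
          · intro hr
            rcases key v u hr with rfl | hadj
            · exact Or.inl rfl
            · exact Or.inr hadj
          · rintro (rfl | hadj)
            · exact SimpleGraph.Reachable.refl _
            · exact hadj.reachable
        rw [hSeq, Set.ncard_coe_finset,
          Finset.card_insert_of_notMem (G.notMem_neighborFinset_self v),
          G.card_neighborFinset_eq_degree v]
        have := hdeg v
        have := hreg v
        omega
      · intro x hx y hy hxy
        have hr : G.Reachable x y := (hx : G.Reachable v x).symm.trans hy
        rcases key x y hr with rfl | hadj
        · exact absurd rfl hxy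
        · exact hadj
  · -- some vertex has degree < a - 1
    push_neg at hreg
    obtain ⟨v, hv⟩ := hreg
    set X : Finset V := insert v (G.neighborFinset v) with hX
    have hXcard : X.card + 1 ≤ a := by
      have h1 := Finset.card_insert_le v (G.neighborFinset v)
      rw [G.card_neighborFinset_eq_degree v] at h1
      have hXdef : X.card = (insert v (G.neighborFinset v)).card := by rw [hX]
      omega
    obtain ⟨s, hst, hind, hsc⟩ := greedy_indep G ha hdeg (Finset.univ \ X)
    have htc : (Finset.univ \ X).card = Fintype.card V - X.card := by
      rw [Finset.card_sdiff_of_subset (Finset.subset_univ X), Finset.card_univ]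
    have hnv : ∀ z ∈ s, v ≠ z ∧ ¬ G.Adj v z := by
      intro z hz
      have hzX := (Finset.mem_sdiff.mp (hst hz)).2
      constructor
      · rintro rfl
        exact hzX (Finset.mem_insert_self _ _)
      · intro hadj
        exact hzX (Finset.mem_insert_of_mem ((G.mem_neighborFinset v z).mpr hadj))
    refine finish (insert v s) ?_ ?_
    · intro x hx y hy hxy hadj
      simp only [Finset.mem_insert] at hx hy
      rcases hx with rfl | hx <;> rcases hy with rfl | hy
      · exact hxy rfl
      · exact (hnv y hy).2 hadj
      · exact (hnv x hx).2 hadj.symm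
      · exact hind x hx y hy hxy hadj
    · have hvs : v ∉ s := fun h => (hnv v h).1 rfl
      rw [Finset.card_insert_of_notMem hvs]
      have hkey : a * c < a * (s.card + 1) := by
        have h1 : a * c = Fintype.card V := by rw [hcard, mul_comm]
        have h2 : a * (s.card + 1) = a * s.card + a := by ring
        rw [h1, h2]
        omega
      have := Nat.lt_of_mul_lt_mul_left hkey
      omega
end
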